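/- arXiv:1807.08480 — 5 statements merged into one kernel-verified Lean document; each statement's English description precedes it below -/
import Mathlib

section
/- Let Ω ⊆ ℝ^d be a closed set and z̄ ∈ Ω. Then the limiting normal cone to Ω at z̄ contains the limiting normal cone to the tangent cone T_Ω(z̄) at 0, and moreover N_{T_Ω(z̄)}(0) equals the union of the regular normal cone N̂_Ω(z̄) with the union over all nonzero directions w ∈ ℝ^d of the limiting normal cones N_{T_Ω(z̄)}(w). -/
open Set Filter Topology Metric Pointwise

noncomputable section

abbrev Rd (d : ℕ) := EuclideanSpace ℝ (Fin d)

/-- Tangent (contingent) cone: w such that ∃ t_k ↓ 0, w_k → w with z + t_k w_k ∈ Ω. -/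
def tangentConeSeq {E : Type*} [NormedAddCommGroup E] [NormedSpace ℝ E]
    (Ω : Set E) (z : E) : Set E :=
  {w | ∃ t : ℕ → ℝ, ∃ wk : ℕ → E,
    (∀ k, 0 < t k) ∧ Tendsto t atTop (nhds 0) ∧
    Tendsto wk atTop (nhds w) ∧ ∀ k, z + t k • wk k ∈ Ω}

/-- Regular (Fréchet) normal cone: polar of the tangent cone (empty outside Ω). -/
def regNormal {E : Type*} [NormedAddCommGroup E] [InnerProductSpace ℝ E]
    (Ω : Set E) (z : E) : Set E :=
  {v | z ∈ Ω ∧ ∀ w ∈ tangentConeSeq Ω z, (inner ℝ v w : ℝ) ≤ 0}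

/-- Limiting (Mordukhovich) normal cone. -/
def limNormal {E : Type*} [NormedAddCommGroup E] [InnerProductSpace ℝ E]
    (Ω : Set E) (z : E) : Set E :=
  {v | ∃ zk vk : ℕ → E, (∀ k, zk k ∈ Ω) ∧ (∀ k, vk k ∈ regNormal Ω (zk k)) ∧
    Tendsto zk atTop (nhds z) ∧ Tendsto vk atTop (nhds v)}

/-- Polar cone of a set. -/
def polarCone {E : Type*} [NormedAddCommGroup E] [InnerProductSpace ℝ E]
    (K : Set E) : Set E :=
  {v | ∀ w ∈ K, (inner ℝ v w : ℝ) ≤ 0}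

/-- Lsp(C): largest subspace L with C + L ⊆ C (the union of all such subspaces). -/
def Lsp {E : Type*} [NormedAddCommGroup E] [NormedSpace ℝ E] (C : Set E) : Set E :=
  {l | ∃ L : Submodule ℝ E, (∀ c ∈ C, ∀ x ∈ L, c + x ∈ C) ∧ l ∈ L}

/-- A cone: closed under multiplication by nonnegative scalars. -/
def IsCone {E : Type*} [NormedAddCommGroup E] [NormedSpace ℝ E] (C : Set E) : Prop :=
  ∀ c ∈ C, ∀ t : ℝ, 0 ≤ t → t • c ∈ C

/-- Metric subregularity of a set-valued map M at (z, w) ∈ Gr M. -/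
def MetricallySubregular {E F : Type*} [NormedAddCommGroup E] [NormedSpace ℝ E]
    [NormedAddCommGroup F] [NormedSpace ℝ F] (M : E → Set F) (z : E) (w : F) : Prop :=
  w ∈ M z ∧ ∃ κ > (0:ℝ), ∃ U ∈ nhds z, ∀ z' ∈ U,
    infDist z' {x | w ∈ M x} ≤ κ * infDist w (M z')

/-- Convex polyhedral: finite intersection of closed halfspaces. -/
def IsConvexPolyhedral {E : Type*} [NormedAddCommGroup E] [NormedSpace ℝ E]
    (C : Set E) : Prop :=
  ∃ (n : ℕ) (a : Fin n → (E →L[ℝ] ℝ)) (α : Fin n → ℝ), C = {z | ∀ i, a i z ≤ α i}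

/-- Polyhedral: finite union of convex polyhedral sets. -/
def IsPolyhedral {E : Type*} [NormedAddCommGroup E] [NormedSpace ℝ E]
    (C : Set E) : Prop :=
  ∃ (n : ℕ) (Ci : Fin n → Set E), (∀ i, IsConvexPolyhedral (Ci i)) ∧ C = ⋃ i, Ci i

/-- Locally polyhedral near a point. -/
def LocallyPolyhedral {E : Type*} [NormedAddCommGroup E] [NormedSpace ℝ E]
    (Ω : Set E) (z : E) : Prop :=
  ∃ W ∈ nhds z, ∃ C : Set E, IsPolyhedral C ∧ Ω ∩ W = C ∩ W

/-- Normal cone of convex analysis. -/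
def convNormal {E : Type*} [NormedAddCommGroup E] [InnerProductSpace ℝ E]
    (K : Set E) (v : E) : Set E :=
  {z | v ∈ K ∧ ∀ w ∈ K, (inner ℝ z (w - v) : ℝ) ≤ 0}

/-- Regular normal cone for subsets of a product of inner product spaces
(with the natural product inner product in the pairing). -/
def regNormal2 {E F : Type*} [NormedAddCommGroup E] [InnerProductSpace ℝ E]
    [NormedAddCommGroup F] [InnerProductSpace ℝ F] (Ω : Set (E × F)) (z : E × F) :
    Set (E × F) :=
  {v | z ∈ Ω ∧ ∀ w ∈ tangentConeSeq Ω z,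
    (inner ℝ v.1 w.1 : ℝ) + (inner ℝ v.2 w.2 : ℝ) ≤ 0}

/-- Iterated tangent cones: the head of the list is the most recent direction,
so `iterTangent D y [vₗ, …, v₁] = T^{l}_D(y; v₁,…,vₗ)`. -/
def iterTangent {E : Type*} [NormedAddCommGroup E] [NormedSpace ℝ E]
    (D : Set E) (y : E) : List E → Set E
  | [] => tangentConeSeq D y
  | v :: vs => tangentConeSeq (iterTangent D y vs) v

/-!
Let `T = T_Ω(z)`. For `y ∈ T` with `y = lim w_k`, `z + t_k w_k ∈ Ω`, and any point `p`, project
`z + t_k (p - y + w_k)` onto `Ω`: rescaled by `t_k`, the proximal normals obtained converge along a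
subsequence to `p - b`, a limiting normal to `Ω` at `z`, where `b ∈ T` is at least as close to `p`
as `y` is. For `v ∈ N̂_T(y)` and `p = y + s v`, the Fréchet property of `v` forces `‖b - y‖ = o(s)`,
so `(p - b) / s → v` as `s ↓ 0`; hence `N̂_T(y) ⊆ N_Ω(z)`, and `N_Ω(z)` is closed.

For the decomposition, `T` is a closed cone, so `N̂_T` is invariant under positive rescaling of the
base point. Limiting normals at `0` come either from base points equal to `0`, giving
`N̂_T(0) = N̂_Ω(z)`, or from nonzero base points, whose normalizations accumulate at a unit vector.
-/

open scoped RealInnerProductSpace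

section TangentCone

variable {E : Type*} [NormedAddCommGroup E] [NormedSpace ℝ E] {Ω K : Set E} {z y w : E}

theorem tangentConeSeq_eq_preimage_closure (Ω : Set E) (z : E) :
    tangentConeSeq Ω z =
      (fun w => ((0 : ℝ), w)) ⁻¹' closure {p : ℝ × E | 0 < p.1 ∧ z + p.1 • p.2 ∈ Ω} := by
  ext w
  simp only [mem_preimage, mem_closure_iff_seq_limit]
  constructor
  · rintro ⟨t, u, ht, ht0, hu, hmem⟩
    exact ⟨fun k => (t k, u k), fun k => ⟨ht k, hmem k⟩, ht0.prodMk_nhds hu⟩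
  · rintro ⟨p, hp, hlim⟩
    exact ⟨fun k => (p k).1, fun k => (p k).2, fun k => (hp k).1, hlim.fst_nhds, hlim.snd_nhds,
      fun k => (hp k).2⟩

theorem isClosed_tangentConeSeq (Ω : Set E) (z : E) : IsClosed (tangentConeSeq Ω z) := by
  rw [tangentConeSeq_eq_preimage_closure]
  exact isClosed_closure.preimage (continuous_const.prodMk continuous_id)

theorem smul_mem_tangentConeSeq (hw : w ∈ tangentConeSeq Ω z) {c : ℝ} (hc : 0 < c) :
    c • w ∈ tangentConeSeq Ω z := by
  obtain ⟨t, u, ht, ht0, hu, hmem⟩ := hw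
  refine ⟨fun k => t k / c, fun k => c • u k, fun k => div_pos (ht k) hc,
    by simpa using ht0.div_const c, hu.const_smul c, fun k => ?_⟩
  rw [smul_smul, div_mul_cancel₀ _ hc.ne']
  exact hmem k

theorem zero_mem_tangentConeSeq (hz : z ∈ Ω) : (0 : E) ∈ tangentConeSeq Ω z :=
  ⟨fun k => 1 / (k + 1), fun _ => 0, fun k => by positivity,
    tendsto_one_div_add_atTop_nhds_zero_nat, tendsto_const_nhds, fun k => by simpa using hz⟩

theorem isCone_tangentConeSeq (hz : z ∈ Ω) : IsCone (tangentConeSeq Ω z) := by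
  intro w hw c hc
  rcases hc.eq_or_lt with rfl | hc
  · simpa using zero_mem_tangentConeSeq hz
  · exact smul_mem_tangentConeSeq hw hc

theorem IsCone.tangentConeSeq_subset_smul (hK : IsCone K) {c : ℝ} (hc : 0 < c) :
    tangentConeSeq K y ⊆ tangentConeSeq K (c • y) := by
  rintro w ⟨t, u, ht, ht0, hu, hmem⟩
  refine ⟨fun k => c * t k, u, fun k => mul_pos hc (ht k), by simpa using ht0.const_mul c, hu,
    fun k => ?_⟩
  simpa only [smul_add, smul_smul] using hK _ (hmem k) c hc.le

theorem IsCone.tangentConeSeq_smul (hK : IsCone K) {c : ℝ} (hc : 0 < c) :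
    tangentConeSeq K (c • y) = tangentConeSeq K y := by
  refine (hK.tangentConeSeq_subset_smul (inv_pos.mpr hc)).trans_eq ?_ |>.antisymm
    (hK.tangentConeSeq_subset_smul hc)
  rw [inv_smul_smul₀ hc.ne']

theorem IsCone.tangentConeSeq_zero (hK : IsCone K) (hKc : IsClosed K) :
    tangentConeSeq K 0 = K := by
  refine Subset.antisymm ?_ fun w hw => ?_
  · rintro w ⟨t, u, ht, -, hu, hmem⟩
    refine hKc.mem_of_tendsto hu (Eventually.of_forall fun k => ?_)
    simpa only [zero_add, inv_smul_smul₀ (ht k).ne'] using hK _ (hmem k) _ (inv_pos.mpr (ht k)).le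
  · exact ⟨fun k => 1 / (k + 1), fun _ => w, fun k => by positivity,
      tendsto_one_div_add_atTop_nhds_zero_nat, tendsto_const_nhds,
      fun k => by simpa using hK w hw _ (by positivity)⟩

end TangentCone

theorem exists_subseq_tendsto_inv_norm_smul {E : Type*} [NormedAddCommGroup E]
    [NormedSpace ℝ E] [ProperSpace E] {x : ℕ → E} (hx : ∀ k, x k ≠ 0) :
    ∃ w : E, ‖w‖ = 1 ∧ ∃ φ : ℕ → ℕ, StrictMono φ ∧
      Tendsto (fun k => ‖x (φ k)‖⁻¹ • x (φ k)) atTop (𝓝 w) := by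
  have hsphere : ∀ k, ‖x k‖⁻¹ • x k ∈ sphere (0 : E) 1 := fun k => by
    simpa using norm_smul_inv_norm (𝕜 := ℝ) (hx k)
  obtain ⟨w, hw, φ, hφ, hlim⟩ := (isCompact_sphere (0 : E) 1).tendsto_subseq hsphere
  exact ⟨w, by simpa using hw, φ, hφ, hlim⟩

section RegularNormal

variable {E : Type*} [NormedAddCommGroup E] [InnerProductSpace ℝ E] {Ω K : Set E} {q y z v : E}

theorem smul_mem_regNormal (hv : v ∈ regNormal Ω q) {c : ℝ} (hc : 0 ≤ c) :
    c • v ∈ regNormal Ω q :=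
  ⟨hv.1, fun w hw => by
    rw [real_inner_smul_left]
    exact mul_nonpos_of_nonneg_of_nonpos hc (hv.2 w hw)⟩

theorem isClosed_regNormal (Ω : Set E) (q : E) : IsClosed (regNormal Ω q) := by
  by_cases hq : q ∈ Ω
  · simp only [regNormal, hq, true_and, ofPred_forall]
    exact isClosed_iInter fun w => isClosed_iInter fun _ =>
      isClosed_le (continuous_id.inner continuous_const) continuous_const
  · simp [regNormal, hq]

theorem IsCone.regNormal_smul (hK : IsCone K) {c : ℝ} (hc : 0 < c) :
    regNormal K (c • y) = regNormal K y := by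
  have hmem : c • y ∈ K ↔ y ∈ K :=
    ⟨fun h => by simpa [inv_smul_smul₀ hc.ne'] using hK _ h c⁻¹ (inv_pos.mpr hc).le,
      fun h => hK y h c hc.le⟩
  simp only [regNormal, hmem, hK.tangentConeSeq_smul hc]

theorem regNormal_tangentConeSeq_zero (hz : z ∈ Ω) :
    regNormal (tangentConeSeq Ω z) 0 = regNormal Ω z := by
  simp only [regNormal, zero_mem_tangentConeSeq hz, hz,
    (isCone_tangentConeSeq hz).tangentConeSeq_zero (isClosed_tangentConeSeq Ω z)]

theorem sub_mem_regNormal_of_forall_dist_le {p : E} (hq : q ∈ Ω)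
    (hnear : ∀ x ∈ Ω, dist p q ≤ dist p x) : p - q ∈ regNormal Ω q := by
  refine ⟨hq, fun w ⟨t, u, ht, ht0, hu, hmem⟩ => ?_⟩
  have hle : ∀ k, ⟪p - q, u k⟫ ≤ t k * ‖u k‖ ^ 2 / 2 := fun k => by
    have h := hnear _ (hmem k)
    rw [dist_eq_norm, dist_eq_norm, show p - (q + t k • u k) = (p - q) - t k • u k by abel] at h
    have h2 := pow_le_pow_left₀ (norm_nonneg _) h 2
    rw [norm_sub_sq_real (p - q), real_inner_smul_right, norm_smul,
      Real.norm_of_nonneg (ht k).le] at h2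
    nlinarith [ht k]
  have hlim : Tendsto (fun k => t k * ‖u k‖ ^ 2 / 2) atTop (𝓝 0) := by
    simpa using (ht0.mul (hu.norm.pow 2)).div_const 2
  exact le_of_tendsto_of_tendsto' (tendsto_const_nhds.inner hu) hlim hle

end RegularNormal

section LimitingNormal

variable {E : Type*} [NormedAddCommGroup E] [InnerProductSpace ℝ E] {Ω K C : Set E} {z w v : E}

def regNormalGraph (Ω : Set E) : Set (E × E) :=
  {p | p.2 ∈ regNormal Ω p.1}

theorem limNormal_eq_preimage_closure (Ω : Set E) (z : E) :
    limNormal Ω z = (fun v => (z, v)) ⁻¹' closure (regNormalGraph Ω) := by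
  ext v
  simp only [mem_preimage, mem_closure_iff_seq_limit]
  constructor
  · rintro ⟨zk, vk, -, hvk, hz, hv⟩
    exact ⟨fun k => (zk k, vk k), hvk, hz.prodMk_nhds hv⟩
  · rintro ⟨p, hp, hlim⟩
    exact ⟨fun k => (p k).1, fun k => (p k).2, fun k => (hp k).1, hp, hlim.fst_nhds,
      hlim.snd_nhds⟩

theorem isClosed_limNormal (Ω : Set E) (z : E) : IsClosed (limNormal Ω z) := by
  rw [limNormal_eq_preimage_closure]
  exact isClosed_closure.preimage (continuous_const.prodMk continuous_id)

theorem regNormal_subset_limNormal : regNormal Ω z ⊆ limNormal Ω z := fun v hv =>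
  ⟨fun _ => z, fun _ => v, fun _ => hv.1, fun _ => hv, tendsto_const_nhds, tendsto_const_nhds⟩

theorem smul_mem_limNormal (hv : v ∈ limNormal Ω z) {c : ℝ} (hc : 0 ≤ c) :
    c • v ∈ limNormal Ω z :=
  let ⟨zk, vk, hzk, hvk, hz, hv⟩ := hv
  ⟨zk, fun k => c • vk k, hzk, fun k => smul_mem_regNormal (hvk k) hc, hz, hv.const_smul c⟩

theorem limNormal_subset_of_regNormal_subset (hC : IsClosed C) (h : ∀ y, regNormal Ω y ⊆ C) :
    limNormal Ω z ⊆ C := fun _ ⟨zk, _, _, hvk, _, hv⟩ =>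
  hC.mem_of_tendsto hv (Eventually.of_forall fun k => h (zk k) (hvk k))

theorem IsCone.limNormal_subset_limNormal_zero (hK : IsCone K) :
    limNormal K w ⊆ limNormal K 0 := by
  rintro v ⟨zk, vk, hzk, hvk, hz, hv⟩
  refine ⟨fun k => (1 / (k + 1) : ℝ) • zk k, vk, fun k => hK _ (hzk k) _ (by positivity),
    fun k => ?_, by simpa using (tendsto_one_div_add_atTop_nhds_zero_nat (𝕜 := ℝ)).smul hz, hv⟩
  rw [hK.regNormal_smul (by positivity)]
  exact hvk k

theorem IsCone.limNormal_zero_eq [ProperSpace E] (hK : IsCone K) :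
    limNormal K 0 = regNormal K 0 ∪ ⋃ w ∈ {w : E | w ≠ 0}, limNormal K w := by
  refine Subset.antisymm ?_ (union_subset regNormal_subset_limNormal
    (iUnion₂_subset fun w _ => hK.limNormal_subset_limNormal_zero))
  intro v hv
  rw [limNormal_eq_preimage_closure, mem_preimage] at hv
  have hsplit : regNormalGraph K ⊆
      {p | p.1 = 0 ∧ p.2 ∈ regNormal K 0} ∪ {p | p.1 ≠ 0 ∧ p.2 ∈ regNormal K p.1} := by
    rintro ⟨y, n⟩ hn
    by_cases hy : y = 0
    · exact Or.inl ⟨hy, hy ▸ hn⟩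
    · exact Or.inr ⟨hy, hn⟩
  have hclosed : IsClosed {p : E × E | p.1 = 0 ∧ p.2 ∈ regNormal K 0} :=
    (isClosed_eq continuous_fst continuous_const).inter
      ((isClosed_regNormal K 0).preimage continuous_snd)
  have hv' := closure_mono hsplit hv
  rw [closure_union] at hv'
  rcases hv' with hv | hv
  · exact Or.inl (hclosed.closure_subset hv).2
  · obtain ⟨p, hp, hlim⟩ := mem_closure_iff_seq_limit.mp hv
    obtain ⟨w, hw, φ, hφ, hdir⟩ := exists_subseq_tendsto_inv_norm_smul fun k => (hp k).1
    refine Or.inr (mem_biUnion (x := w) (ne_zero_of_norm_ne_zero (by simp [hw])) ?_)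
    refine ⟨_, fun k => (p (φ k)).2, fun k => hK _ ((hp (φ k)).2.1) _ (by positivity),
      fun k => ?_, hdir, hlim.snd_nhds.comp hφ.tendsto_atTop⟩
    rw [hK.regNormal_smul (inv_pos.mpr (norm_pos_iff.mpr (hp (φ k)).1))]
    exact (hp (φ k)).2

end LimitingNormal

section Proper

variable {E : Type*} [NormedAddCommGroup E] [InnerProductSpace ℝ E] [ProperSpace E]
  {Ω S : Set E} {y z v : E}

theorem exists_inner_sub_le_of_mem_regNormal (hv : v ∈ regNormal S y) {ε : ℝ} (hε : 0 < ε) :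
    ∃ δ > 0, ∀ u ∈ S, ‖u - y‖ ≤ δ → ⟪v, u - y⟫ ≤ ε * ‖u - y‖ := by
  by_contra! hcon
  choose u hu hclose hbad using fun m : ℕ => hcon (1 / (m + 1)) (by positivity)
  have hne : ∀ m, u m - y ≠ 0 := fun m h => by simpa [h] using hbad m
  obtain ⟨a, -, φ, hφ, hdir⟩ := exists_subseq_tendsto_inv_norm_smul hne
  have hdist : Tendsto (fun m => ‖u m - y‖) atTop (𝓝 0) :=
    squeeze_zero (fun _ => norm_nonneg _) hclose tendsto_one_div_add_atTop_nhds_zero_nat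
  have ha : a ∈ tangentConeSeq S y :=
    ⟨fun k => ‖u (φ k) - y‖, _, fun k => norm_pos_iff.mpr (hne (φ k)),
      hdist.comp hφ.tendsto_atTop, hdir, fun k => by
        rw [smul_inv_smul₀ (norm_ne_zero_iff.mpr (hne (φ k))), add_sub_cancel]
        exact hu (φ k)⟩
  have hlarge : ∀ k, ε ≤ ⟪v, ‖u (φ k) - y‖⁻¹ • (u (φ k) - y)⟫ := fun k => by
    rw [real_inner_smul_right, le_inv_mul_iff₀ (norm_pos_iff.mpr (hne (φ k)))]
    linarith [hbad (φ k)]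
  have := ge_of_tendsto (tendsto_const_nhds.inner hdir) (Eventually.of_forall hlarge)
  linarith [hv.2 a ha]

theorem exists_mem_tangentConeSeq_sub_mem_limNormal (hΩ : IsClosed Ω)
    (hy : y ∈ tangentConeSeq Ω z) (p : E) :
    ∃ b ∈ tangentConeSeq Ω z, ‖p - b‖ ≤ ‖p - y‖ ∧ p - b ∈ limNormal Ω z := by
  obtain ⟨t, u, ht, ht0, hu, hmem⟩ := hy
  obtain ⟨q, hqΩ, hqnear⟩ : ∃ q : ℕ → E, (∀ k, q k ∈ Ω) ∧ ∀ k, ∀ x ∈ Ω,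
      dist (z + t k • (p - y + u k)) (q k) ≤ dist (z + t k • (p - y + u k)) x := by
    choose q hq hqd using fun k =>
      hΩ.exists_infDist_eq_dist ⟨_, hmem 0⟩ (z + t k • (p - y + u k))
    exact ⟨q, hq, fun k x hx => hqd k ▸ infDist_le_dist_of_mem hx⟩
  set b : ℕ → E := fun k => (t k)⁻¹ • (q k - z)
  have hqb : ∀ k, q k = z + t k • b k := fun k => by
    simp [b, smul_inv_smul₀ (ht k).ne']
  set n : ℕ → E := fun k => p - y + u k - b k
  have hn : ∀ k, n k ∈ regNormal Ω (q k) := fun k => by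
    convert smul_mem_regNormal (sub_mem_regNormal_of_forall_dist_le (hqΩ k) (hqnear k))
      (inv_pos.mpr (ht k)).le using 1
    rw [hqb k, add_sub_add_left_eq_sub, ← smul_sub, inv_smul_smul₀ (ht k).ne']
  have hnorm : ∀ k, ‖n k‖ ≤ ‖p - y‖ := fun k => by
    have h := hqnear k _ (hmem k)
    rw [dist_eq_norm, dist_eq_norm, hqb k, add_sub_add_left_eq_sub, add_sub_add_left_eq_sub,
      ← smul_sub, ← smul_sub, norm_smul, norm_smul, add_sub_cancel_right] at h
    exact le_of_mul_le_mul_left h (norm_pos_iff.mpr (ht k).ne')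
  obtain ⟨C, hC⟩ := isBounded_iff_forall_norm_le.mp (isBounded_range_of_tendsto u hu)
  have hbdd : ∀ k, b k ∈ closedBall (0 : E) (2 * ‖p - y‖ + C) := fun k => by
    rw [mem_closedBall_zero_iff, show b k = p - y + u k - n k by simp [n]]
    calc ‖p - y + u k - n k‖ ≤ ‖p - y‖ + ‖u k‖ + ‖n k‖ :=
          norm_sub_le_of_le (norm_add_le _ _) le_rfl
      _ ≤ 2 * ‖p - y‖ + C := by linarith [hC _ (mem_range_self k), hnorm k]
  obtain ⟨b₀, -, φ, hφ, hb⟩ := tendsto_subseq_of_bounded isBounded_closedBall hbdd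
  have htφ := ht0.comp hφ.tendsto_atTop
  have hnlim : Tendsto (fun k => n (φ k)) atTop (𝓝 (p - b₀)) := by
    simpa using ((hu.comp hφ.tendsto_atTop).const_add (p - y)).sub hb
  refine ⟨b₀, ⟨t ∘ φ, b ∘ φ, fun k => ht _, htφ, hb, fun k => hqb (φ k) ▸ hqΩ _⟩,
    le_of_tendsto hnlim.norm (Eventually.of_forall fun k => hnorm _),
    ⟨fun k => q (φ k), fun k => n (φ k), fun k => hqΩ _, fun k => hn _, ?_, hnlim⟩⟩
  simpa using ((htφ.smul hb).const_add z).congr fun k => (hqb (φ k)).symm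

theorem regNormal_tangentConeSeq_subset_limNormal (hΩ : IsClosed Ω) (y : E) :
    regNormal (tangentConeSeq Ω z) y ⊆ limNormal Ω z := by
  intro v hv
  rw [← (isClosed_limNormal Ω z).closure_eq, Metric.mem_closure_iff]
  intro ε hε
  obtain ⟨δ, hδ, hfrechet⟩ := exists_inner_sub_le_of_mem_regNormal hv (by positivity : 0 < ε / 3)
  set s := δ / (2 * ‖v‖ + 1)
  have hs : 0 < s := by positivity
  have hsv : ‖s • v‖ = s * ‖v‖ := by rw [norm_smul, Real.norm_of_nonneg hs.le]
  have hsδ : 2 * (s * ‖v‖) ≤ δ := by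
    rw [div_mul_eq_mul_div, ← mul_div_assoc, div_le_iff₀ (by positivity)]
    nlinarith [norm_nonneg v]
  obtain ⟨b, hb, hbp, hbN⟩ := exists_mem_tangentConeSeq_sub_mem_limNormal hΩ hv.1 (y + s • v)
  have hclose : ‖s • v - (b - y)‖ ≤ ‖s • v‖ := by
    rw [show s • v - (b - y) = y + s • v - b by abel]
    simpa using hbp
  have hδclose : ‖b - y‖ ≤ δ := by
    linarith [norm_le_norm_add_norm_sub (s • v) (b - y)]
  have hsq : ‖b - y‖ ^ 2 ≤ 2 * s * ⟪v, b - y⟫ := by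
    have := pow_le_pow_left₀ (norm_nonneg _) hclose 2
    rw [norm_sub_sq_real, real_inner_smul_left] at this
    linarith
  have hby : ‖b - y‖ ≤ 2 * s * (ε / 3) := by
    have := mul_le_mul_of_nonneg_left (hfrechet b hb hδclose) (by positivity : 0 ≤ 2 * s)
    nlinarith [norm_nonneg (b - y), mul_pos hs hε]
  refine ⟨s⁻¹ • (y + s • v - b), smul_mem_limNormal hbN (inv_nonneg.mpr hs.le), ?_⟩
  rw [dist_eq_norm, show v - s⁻¹ • (y + s • v - b) = s⁻¹ • (b - y) by
      rw [smul_sub, smul_add, inv_smul_smul₀ hs.ne', smul_sub]; abel,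
    norm_smul, Real.norm_of_nonneg (inv_nonneg.mpr hs.le), inv_mul_lt_iff₀ hs]
  linarith [mul_pos hs hε]

end Proper

theorem stmt0 {d : ℕ} (Ω : Set (Rd d)) (hΩ : IsClosed Ω) (z : Rd d) (hz : z ∈ Ω) :
    limNormal (tangentConeSeq Ω z) 0 ⊆ limNormal Ω z ∧
    limNormal (tangentConeSeq Ω z) 0 =
      regNormal Ω z ∪ ⋃ w ∈ {w : Rd d | w ≠ 0}, limNormal (tangentConeSeq Ω z) w := by
  refine ⟨limNormal_subset_of_regNormal_subset (isClosed_limNormal Ω z)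
    (regNormal_tangentConeSeq_subset_limNormal hΩ), ?_⟩
  rw [(isCone_tangentConeSeq hz).limNormal_zero_eq, regNormal_tangentConeSeq_zero hz]
end
end

section
/- Let M : ℝ^d ⇉ ℝ^s be a set-valued mapping whose graph is a closed cone. If M is metrically subregular at (0,0), then there exists κ > 0 such that dist(z, M⁻¹(0)) ≤ κ · dist(0, M(z)) for all z ∈ ℝ^d; in particular M is metrically subregular at every point (z̄, 0) ∈ Gr M. -/
/-!
When the graph of `M` is a cone, both `z ↦ dist(z, M⁻¹(0))` and `z ↦ dist(0, M(z))` are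
positively homogeneous of degree one. Any `z` can be scaled into the neighbourhood of the
origin where the subregularity estimate holds, and dividing by the scale factor gives the
estimate at `z` with the same constant.
-/

open Set Filter Topology Metric Pointwise

noncomputable section

theorem le_of_eventually_le_of_posHomogeneous {E : Type*} [NormedAddCommGroup E]
    [NormedSpace ℝ E] {f g : E → ℝ}
    (hf : ∀ t : ℝ, 0 < t → ∀ z, f (t • z) = t * f z)
    (hg : ∀ t : ℝ, 0 < t → ∀ z, g (t • z) = t * g z)
    (hle : ∀ᶠ z in 𝓝 0, f z ≤ g z) (z : E) : f z ≤ g z := by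
  have hshrink : Tendsto (fun t : ℝ => t • z) (𝓝[>] 0) (𝓝 0) := by
    simpa using (tendsto_id.smul_const z).mono_left (nhdsWithin_le_nhds (a := (0 : ℝ)))
  obtain ⟨t, hzt, ht⟩ := ((hshrink.eventually hle).and self_mem_nhdsWithin).exists
  rw [hf t ht, hg t ht] at hzt
  exact le_of_mul_le_mul_left hzt ht

section ConeGraph

variable {E F : Type*} [NormedAddCommGroup E] [NormedSpace ℝ E]
  [NormedAddCommGroup F] [NormedSpace ℝ F] {M : E → Set F}

theorem map_smul_of_isCone_graph (hM : IsCone {p : E × F | p.2 ∈ M p.1}) {t : ℝ} (ht : 0 < t)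
    (z : E) : M (t • z) = t • M z := by
  ext w
  rw [mem_smul_set_iff_inv_smul_mem₀ ht.ne']
  constructor
  · intro hw
    simpa [smul_smul, ht.ne'] using hM (t • z, w) hw t⁻¹ (inv_nonneg.mpr ht.le)
  · intro hw
    simpa [smul_smul, ht.ne'] using hM (z, t⁻¹ • w) hw t ht.le

theorem smul_zeroSet_of_isCone_graph (hM : IsCone {p : E × F | p.2 ∈ M p.1}) {t : ℝ}
    (ht : 0 < t) : t • {x | (0 : F) ∈ M x} = {x | (0 : F) ∈ M x} := by
  ext x
  rw [mem_smul_set_iff_inv_smul_mem₀ ht.ne', mem_ofPred_eq, mem_ofPred_eq,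
    map_smul_of_isCone_graph hM (inv_pos.mpr ht), zero_mem_smul_set_iff (inv_ne_zero ht.ne')]

theorem infDist_zeroSet_smul_of_isCone_graph (hM : IsCone {p : E × F | p.2 ∈ M p.1})
    {t : ℝ} (ht : 0 < t) (z : E) :
    infDist (t • z) {x | (0 : F) ∈ M x} = t * infDist z {x | (0 : F) ∈ M x} := by
  rw [← smul_zeroSet_of_isCone_graph hM ht, infDist_smul₀ ht.ne', Real.norm_of_nonneg ht.le,
    smul_zeroSet_of_isCone_graph hM ht]

theorem infDist_zero_map_smul_of_isCone_graph (hM : IsCone {p : E × F | p.2 ∈ M p.1})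
    {t : ℝ} (ht : 0 < t) (z : E) :
    infDist (0 : F) (M (t • z)) = t * infDist 0 (M z) := by
  simpa [map_smul_of_isCone_graph hM ht, abs_of_pos ht] using infDist_smul₀ ht.ne' (M z) (0 : F)

theorem MetricallySubregular.exists_global_bound_of_isCone_graph
    (hM : IsCone {p : E × F | p.2 ∈ M p.1}) (hsub : MetricallySubregular M 0 0) :
    ∃ κ > (0 : ℝ), ∀ z : E, infDist z {x | (0 : F) ∈ M x} ≤ κ * infDist 0 (M z) := by
  obtain ⟨-, κ, hκ, U, hU, hbound⟩ := hsub
  refine ⟨κ, hκ, le_of_eventually_le_of_posHomogeneous ?_ ?_ (mem_of_superset hU hbound)⟩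
  · exact fun _ => infDist_zeroSet_smul_of_isCone_graph hM
  · intro t ht z
    rw [infDist_zero_map_smul_of_isCone_graph hM ht, mul_left_comm]

theorem metricallySubregular_of_global_bound {z : E} {w : F} (hz : w ∈ M z)
    {κ : ℝ} (hκ : 0 < κ) (hbound : ∀ z' : E, infDist z' {x | w ∈ M x} ≤ κ * infDist w (M z')) :
    MetricallySubregular M z w :=
  ⟨hz, κ, hκ, univ, univ_mem, fun z' _ => hbound z'⟩

end ConeGraph

theorem stmt1_general {d s : ℕ} (M : Rd d → Set (Rd s))
    (hcone : ∀ p : Rd d × Rd s, p.2 ∈ M p.1 → ∀ t : ℝ, 0 ≤ t → t • p.2 ∈ M (t • p.1))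
    (hsub : MetricallySubregular M 0 0) :
    (∃ κ > (0:ℝ), ∀ z : Rd d,
        Metric.infDist z {x | (0 : Rd s) ∈ M x} ≤ κ * Metric.infDist 0 (M z)) ∧
    ∀ z : Rd d, (0 : Rd s) ∈ M z → MetricallySubregular M z 0 := by
  obtain ⟨κ, hκ, hbound⟩ := hsub.exists_global_bound_of_isCone_graph hcone
  exact ⟨⟨κ, hκ, hbound⟩, fun z hz => metricallySubregular_of_global_bound hz hκ hbound⟩

theorem stmt1 {d s : ℕ} (M : Rd d → Set (Rd s))
    (hclosed : IsClosed {p : Rd d × Rd s | p.2 ∈ M p.1})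
    (hcone : ∀ p : Rd d × Rd s, p.2 ∈ M p.1 → ∀ t : ℝ, 0 ≤ t → t • p.2 ∈ M (t • p.1))
    (hsub : MetricallySubregular M 0 0) :
    (∃ κ > (0:ℝ), ∀ z : Rd d,
        Metric.infDist z {x | (0 : Rd s) ∈ M x} ≤ κ * Metric.infDist 0 (M z)) ∧
    ∀ z : Rd d, (0 : Rd s) ∈ M z → MetricallySubregular M z 0 :=
  stmt1_general M hcone hsub
end
end

section
/- Let P : ℝ^d → ℝ^s be continuously differentiable, D ⊆ ℝ^s closed, and suppose the mapping z ⇉ P(z) − D is metrically subregular at (z̄, 0) (where P(z̄) ∈ D). Then the linearized mapping u ⇉ ∇P(z̄)u − T_D(P(z̄)) is metrically subregular at (0, 0). -/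
/-!
Put `Ω = P⁻¹(D)` and `A = ∇P(z̄)`. Given `u` and `w ∈ T_D(P z̄)` along `t_k ↓ 0`, `w_k → w`,
subregularity at the points `z̄ + t_k u` provides `x_k ∈ Ω` at distance at most
`κ ‖P(z̄ + t_k u) - P z̄ - t_k w_k‖ ≈ κ t_k ‖A u - w‖` from them. The rescaled points
`(x_k - z̄) / t_k` stay bounded, so a subsequence converges to some `ū ∈ T_Ω(z̄)` with
`‖ū - u‖ ≤ κ ‖A u - w‖`, and `A ū ∈ T_D(P z̄)` by the chain rule along sequences.
Taking the infimum over `w` gives subregularity of the linearization with the same modulus,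
on all of `ℝ^d`.
-/

open Set Filter Topology Metric Pointwise

noncomputable section

lemma infDist_zero_setOf_sub_mem {F : Type*} [NormedAddCommGroup F] (y : F) (D : Set F) :
    infDist 0 {v | y - v ∈ D} = infDist y D := by
  have himage : {v | y - v ∈ D} = (y - ·) '' D := by
    ext v
    exact ⟨fun hv => ⟨y - v, hv, sub_sub_cancel y v⟩, by rintro ⟨x, hx, rfl⟩; simpa using hx⟩
  simpa [himage] using infDist_image (IsometryEquiv.subLeft y).isometry (x := y) (t := D)

lemma le_mul_infDist {X : Type*} [PseudoMetricSpace X] {y : X} {V : Set X} {a κ : ℝ}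
    (hκ : 0 < κ) (hV : V.Nonempty) (h : ∀ v ∈ V, a ≤ κ * dist y v) : a ≤ κ * infDist y V := by
  rw [← div_le_iff₀' hκ, le_infDist hV]
  exact fun v hv => (div_le_iff₀' hκ).2 (h v hv)

lemma exists_tendsto_subseq_dist_le {X : Type*} [PseudoMetricSpace X] [ProperSpace X]
    {f : ℕ → X} {g : ℕ → ℝ} {u : X} {r : ℝ}
    (hg : Tendsto g atTop (𝓝 r)) (hfg : ∀ᶠ k in atTop, dist (f k) u ≤ g k) :
    ∃ ū, dist ū u ≤ r ∧ ∃ φ : ℕ → ℕ, StrictMono φ ∧ Tendsto (f ∘ φ) atTop (𝓝 ū) := by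
  have hbdd : ∀ᶠ k in atTop, f k ∈ closedBall u (r + 1) := by
    filter_upwards [hfg, hg.eventually_le_const (lt_add_one r)] with k hk hk'
    exact hk.trans hk'
  obtain ⟨ū, -, φ, hφ, hconv⟩ :=
    tendsto_subseq_of_frequently_bounded isBounded_closedBall hbdd.frequently
  refine ⟨ū, le_of_tendsto_of_tendsto (hconv.dist tendsto_const_nhds)
    (hg.comp hφ.tendsto_atTop) ?_, φ, hφ, hconv⟩
  exact hφ.tendsto_atTop.eventually hfg

variable {E F : Type*} [NormedAddCommGroup E] [NormedSpace ℝ E]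
  [NormedAddCommGroup F] [NormedSpace ℝ F]

lemma zero_mem_tangentConeSeq_s5 {D : Set E} {y : E} (hy : y ∈ D) :
    (0 : E) ∈ tangentConeSeq D y :=
  ⟨fun k => 1 / (k + 1), fun _ => 0, fun _ => by positivity,
    tendsto_one_div_add_atTop_nhds_zero_nat, tendsto_const_nhds, fun _ => by simpa using hy⟩

lemma HasFDerivAt.tendsto_inv_smul_sub {P : E → F} {A : E →L[ℝ] F} {z : E}
    (hA : HasFDerivAt P A z) {t : ℕ → ℝ} {u : ℕ → E} {w : E} (ht : ∀ k, 0 < t k)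
    (ht0 : Tendsto t atTop (𝓝 0)) (hu : Tendsto u atTop (𝓝 w)) :
    Tendsto (fun k => (t k)⁻¹ • (P (z + t k • u k) - P z)) atTop (𝓝 (A w)) := by
  refine hA.hasFDerivWithinAt (s := univ).lim (by simpa using ht0.smul hu)
    (.of_forall fun _ => mem_univ _) ?_
  simpa only [inv_smul_smul₀ (ht _).ne'] using hu

lemma HasFDerivAt.mapsTo_tangentConeSeq {P : E → F} {A : E →L[ℝ] F} {z : E}
    (hA : HasFDerivAt P A z) (D : Set F) :
    MapsTo A (tangentConeSeq (P ⁻¹' D) z) (tangentConeSeq D (P z)) := by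
  rintro w ⟨t, u, ht, ht0, hu, hmem⟩
  refine ⟨t, fun k => (t k)⁻¹ • (P (z + t k • u k) - P z), ht, ht0,
    hA.tendsto_inv_smul_sub ht ht0 hu, fun k => ?_⟩
  simpa [smul_inv_smul₀ (ht k).ne'] using hmem k

lemma infDist_le_mul_norm_inv_smul_sub {D : Set F} {y p w : F} {t : ℝ} (ht : 0 < t)
    (hmem : p + t • w ∈ D) : infDist y D ≤ t * ‖t⁻¹ • (y - p) - w‖ :=
  calc infDist y D ≤ dist y (p + t • w) := infDist_le_dist_of_mem hmem
    _ = ‖t • (t⁻¹ • (y - p) - w)‖ := by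
      rw [dist_eq_norm, smul_sub, smul_inv_smul₀ ht.ne']
      congr 1; abel
    _ = t * ‖t⁻¹ • (y - p) - w‖ := by rw [norm_smul, Real.norm_of_nonneg ht.le]

lemma exists_mem_tangentConeSeq_preimage_dist_le [ProperSpace E] {P : E → F}
    {A : E →L[ℝ] F} {z : E} (hA : HasFDerivAt P A z) {D : Set F} (hz : P z ∈ D)
    {κ : ℝ} (hκ : 0 ≤ κ) (hsub : ∀ᶠ x in 𝓝 z, infDist x (P ⁻¹' D) ≤ κ * infDist (P x) D)
    (u : E) {w : F} (hw : w ∈ tangentConeSeq D (P z)) :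
    ∃ ū ∈ tangentConeSeq (P ⁻¹' D) z, dist ū u ≤ κ * ‖A u - w‖ := by
  obtain ⟨t, wk, ht, ht0, hwk, hmem⟩ := hw
  have hx : ∀ k, ∃ x ∈ P ⁻¹' D,
      dist (z + t k • u) x < infDist (z + t k • u) (P ⁻¹' D) + t k * t k := fun k =>
    (infDist_lt_iff ⟨z, hz⟩).1 (lt_add_of_pos_right _ (mul_pos (ht k) (ht k)))
  choose x hxD hxdist using hx
  set uk : ℕ → E := fun k => (t k)⁻¹ • (x k - z)
  have hzuk : ∀ k, z + t k • uk k = x k := fun k => by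
    simp [uk, smul_inv_smul₀ (ht k).ne']
  have hsubk : ∀ᶠ k in atTop, infDist (z + t k • u) (P ⁻¹' D)
      ≤ κ * infDist (P (z + t k • u)) D := by
    refine Tendsto.eventually ?_ hsub
    simpa using tendsto_const_nhds.add (ht0.smul_const u)
  have hbound : ∀ᶠ k in atTop,
      dist (uk k) u ≤ κ * ‖(t k)⁻¹ • (P (z + t k • u) - P z) - wk k‖ + t k := by
    filter_upwards [hsubk] with k hk
    have hscale : t k * dist (uk k) u = dist (z + t k • u) (x k) := by
      rw [← hzuk, dist_comm, dist_add_left, dist_smul₀, Real.norm_of_nonneg (ht k).le]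
    refine le_of_mul_le_mul_left ?_ (ht k)
    calc t k * dist (uk k) u
        ≤ infDist (z + t k • u) (P ⁻¹' D) + t k * t k := hscale ▸ (hxdist k).le
      _ ≤ κ * (t k * ‖(t k)⁻¹ • (P (z + t k • u) - P z) - wk k‖) + t k * t k := by
        gcongr
        exact hk.trans (mul_le_mul_of_nonneg_left
          (infDist_le_mul_norm_inv_smul_sub (ht k) (hmem k)) hκ)
      _ = t k * (κ * ‖(t k)⁻¹ • (P (z + t k • u) - P z) - wk k‖ + t k) := by ring
  have hlim : Tendsto (fun k => κ * ‖(t k)⁻¹ • (P (z + t k • u) - P z) - wk k‖ + t k)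
      atTop (𝓝 (κ * ‖A u - w‖ + 0)) :=
    (((hA.tendsto_inv_smul_sub ht ht0 tendsto_const_nhds).sub hwk).norm.const_mul κ).add ht0
  obtain ⟨ū, hdist, φ, hφ, hconv⟩ := exists_tendsto_subseq_dist_le hlim hbound
  refine ⟨ū, ⟨t ∘ φ, uk ∘ φ, fun k => ht _, ht0.comp hφ.tendsto_atTop, hconv, fun k => ?_⟩,
    by simpa using hdist⟩
  simpa [hzuk] using hxD (φ k)

theorem stmt5_general {d s : ℕ} (P : Rd d → Rd s) (hP : ContDiff ℝ 1 P)
    (D : Set (Rd s)) (z : Rd d)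
    (hsub : MetricallySubregular (fun x => {v : Rd s | P x - v ∈ D}) z 0) :
    MetricallySubregular
      (fun u => {v : Rd s | fderiv ℝ P z u - v ∈ tangentConeSeq D (P z)}) 0 0 := by
  obtain ⟨hz0, κ, hκ, U, hU, hUsub⟩ := hsub
  have hz : P z ∈ D := by simpa using hz0
  have hA : HasFDerivAt P (fderiv ℝ P z) z := (hP.differentiable one_ne_zero z).hasFDerivAt
  have hsub : ∀ᶠ x in 𝓝 z, infDist x (P ⁻¹' D) ≤ κ * infDist (P x) D := by
    filter_upwards [hU] with x hx
    simpa [infDist_zero_setOf_sub_mem, preimage] using hUsub x hx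
  have h0 := zero_mem_tangentConeSeq_s5 hz
  refine ⟨by simpa using h0, κ, hκ, univ, univ_mem, fun u _ => ?_⟩
  refine le_mul_infDist hκ ⟨fderiv ℝ P z u, by simpa using h0⟩ fun v hv => ?_
  obtain ⟨ū, hū, hdist⟩ := exists_mem_tangentConeSeq_preimage_dist_le hA hz hκ.le hsub u hv
  calc infDist u _ ≤ dist u ū :=
        infDist_le_dist_of_mem (by simpa using hA.mapsTo_tangentConeSeq D hū)
    _ ≤ κ * dist 0 v := by simpa [dist_comm] using hdist

theorem stmt5 {d s : ℕ} (P : Rd d → Rd s) (hP : ContDiff ℝ 1 P)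
    (D : Set (Rd s)) (hD : IsClosed D) (z : Rd d) (hz : P z ∈ D)
    (hsub : MetricallySubregular (fun x => {v : Rd s | P x - v ∈ D}) z 0) :
    MetricallySubregular
      (fun u => {v : Rd s | fderiv ℝ P z u - v ∈ tangentConeSeq D (P z)}) 0 0 :=
  stmt5_general P hP D z hsub
end
end

section
/- Consider the quadratic program min q(z) = ½ zᵀBz + bᵀz subject to Az ∈ C, where B is a positive semidefinite d×d matrix, b ∈ ℝ^d, A is an s×d matrix, and C ⊆ ℝ^s is a polyhedral set (a finite union of convex polyhedral sets). Then exactly one of the following holds: (1) the program is infeasible; (2) it is unbounded below, i.e. there is a feasible sequence z_k with q(z_k) → −∞; (3) there exists a global solution z̄. -/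
open Set Filter Topology Metric Pointwise

noncomputable section

/-!
The argument is the Frank–Wolfe induction, run on the dimension of the affine span. Since the
feasible set is a finite union of convex polyhedra, it suffices to minimize `q` over one convex
polyhedron `P` and compare finitely many minima. If `P ∩ {q ≤ q z₁}` is bounded it is compact
and we are done. Otherwise this closed convex set has a nonzero asymptotic direction `u`; then
`⟪u, B u⟫ ≤ 0`, hence `B u = 0`, and `⟪b, u⟫ = 0` because `q` is bounded below on the ray
`z₁ + ℝ≥0 u ⊆ P`. So `q` is constant along `u`. Moving a point of `P` along `-u` either hits one
of the finitely many facets `a i = α i` with `a i u < 0`, or, when there are none, stays in `P`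
and reaches a fixed hyperplane transversal to `u`. Every value of `q` on `P` is thus taken on
one of finitely many hyperplane slices of `P`, whose affine spans have smaller dimension.
-/

open scoped RealInnerProductSpace

theorem nonpos_of_forall_pos_quadratic_le {x y z c : ℝ}
    (h : ∀ t > 0, x + t * y + t ^ 2 * z ≤ c) : z ≤ 0 := by
  by_contra! hz
  set t := (|y| + |c - x| + 1) / z + 1
  have ht : (t - 1) * z = |y| + |c - x| + 1 := by simp only [t]; field_simp; ring
  have ht1 : 1 ≤ t := le_add_of_nonneg_left (by positivity)
  have := h t (by linarith)
  nlinarith [le_abs_self (c - x), neg_abs_le y, abs_nonneg (c - x), abs_nonneg y,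
    mul_le_mul_of_nonneg_left (neg_abs_le y) (by linarith : (0:ℝ) ≤ t)]

theorem nonpos_of_forall_pos_add_mul_le {x y c : ℝ} (h : ∀ t > 0, x + t * y ≤ c) : y ≤ 0 :=
  nonpos_of_forall_pos_quadratic_le (x := x) (y := 0) fun t ht => by
    simpa using h (t ^ 2) (by positivity)

theorem exists_isMinOn_of_finite_cover {α ι : Type*} [Finite ι] {f : α → ℝ} {S : Set α}
    (T : ι → Set α) (hT : ∀ i, T i ⊆ S) (hmin : ∀ i, (T i).Nonempty → ∃ z ∈ T i, IsMinOn f (T i) z)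
    (hcover : ∀ z ∈ S, ∃ i, ∃ z' ∈ T i, f z' ≤ f z) (hS : S.Nonempty) :
    ∃ z ∈ S, IsMinOn f S z := by
  obtain ⟨z, hz⟩ := hS
  have : Nonempty α := ⟨z⟩
  choose! m hmT hm using hmin
  obtain ⟨i, z', hz', -⟩ := hcover z hz
  obtain ⟨i₀, hi₀, hi₀min⟩ :=
    exists_min_image {i | (T i).Nonempty} (fun i => f (m i)) (toFinite _) ⟨i, z', hz'⟩
  refine ⟨m i₀, hT i₀ (hmT i₀ hi₀), isMinOn_iff.2 fun z hz => ?_⟩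
  obtain ⟨j, z', hz', hle⟩ := hcover z hz
  calc f (m i₀) ≤ f (m j) := hi₀min j ⟨z', hz'⟩
    _ ≤ f z' := isMinOn_iff.1 (hm j ⟨z', hz'⟩) z' hz'
    _ ≤ f z := hle

theorem exists_isMinOn_of_isBounded_sublevel {E : Type*} [PseudoMetricSpace E] [ProperSpace E]
    {f : E → ℝ} (hf : Continuous f) {S : Set E} (hS : IsClosed S) {z₀ : E} (hz₀ : z₀ ∈ S)
    (hL : Bornology.IsBounded (S ∩ {z | f z ≤ f z₀})) : ∃ z ∈ S, IsMinOn f S z := by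
  have hz₀L : z₀ ∈ S ∩ {z | f z ≤ f z₀} := ⟨hz₀, le_refl (f z₀)⟩
  obtain ⟨z, hz, hmin⟩ := (isCompact_of_isClosed_isBounded
    (hS.inter (isClosed_le hf continuous_const)) hL).exists_isMinOn ⟨z₀, hz₀L⟩ hf.continuousOn
  refine ⟨z, hz.1, isMinOn_iff.2 fun w hw => ?_⟩
  rcases le_or_gt (f w) (f z₀) with hw₀ | hw₀
  · exact isMinOn_iff.1 hmin w ⟨hw, hw₀⟩
  · exact (isMinOn_iff.1 hmin z₀ hz₀L).trans hw₀.le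

theorem finrank_vectorSpan_inter_hyperplane_lt {k E : Type*} [Field k] [AddCommGroup E]
    [Module k E] [FiniteDimensional k E] {S : Set E} {f : Module.Dual k E} {u : E}
    (hu : u ∈ vectorSpan k S) (hfu : f u ≠ 0) (c : k) :
    Module.finrank k (vectorSpan k (S ∩ {z | f z = c})) < Module.finrank k (vectorSpan k S) := by
  have hle : vectorSpan k (S ∩ {z | f z = c}) ≤ vectorSpan k S ⊓ LinearMap.ker f := by
    refine le_inf (vectorSpan_mono k inter_subset_left) (Submodule.span_le.2 ?_)
    rintro _ ⟨x, ⟨-, hx⟩, y, ⟨-, hy⟩, rfl⟩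
    simp_all
  have hlt : vectorSpan k S ⊓ LinearMap.ker f < vectorSpan k S :=
    inf_lt_left.2 fun h => hfu (h hu)
  exact (Submodule.finrank_mono hle).trans_lt (Submodule.finrank_lt_finrank_of_lt hlt)

theorem exists_ne_zero_mem_asymptoticCone {E : Type*} [NormedAddCommGroup E] [NormedSpace ℝ E]
    [ProperSpace E] {S : Set E} (hS : ¬ Bornology.IsBounded S) :
    ∃ u ∈ asymptoticCone ℝ S, u ≠ 0 := by
  have hfar : ∀ k : ℕ, ∃ z ∈ S, (k : ℝ) < ‖z‖ := by
    intro k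
    by_contra! h
    exact hS (isBounded_iff_forall_norm_le.2 ⟨k, h⟩)
  choose z hzS hz using hfar
  have hpos k : 0 < ‖z k‖ := (Nat.cast_nonneg k).trans_lt (hz k)
  have hsph k : ‖z k‖⁻¹ • z k ∈ sphere (0 : E) 1 := by
    simp [norm_smul, (hpos k).ne']
  obtain ⟨u, hu, φ, hφ, hlim⟩ := (isCompact_sphere (0 : E) 1).tendsto_subseq hsph
  have hnorm : Tendsto (fun k => ‖z (φ k)‖) atTop atTop :=
    tendsto_atTop_mono (fun k => (Nat.cast_le.2 (hφ.id_le k)).trans (hz (φ k)).le)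
      tendsto_natCast_atTop_atTop
  refine ⟨u, ?_, ne_zero_of_mem_unit_sphere ⟨u, hu⟩⟩
  refine (hnorm.atTop_smul_nhds_tendsto_asymptoticNhds hlim).frequently
    (Frequently.of_forall fun k => ?_)
  simpa [smul_smul, (hpos (φ k)).ne'] using hzS (φ k)

section Polyhedra

variable {E F : Type*} [NormedAddCommGroup E] [NormedSpace ℝ E]
  [NormedAddCommGroup F] [NormedSpace ℝ F] {ι : Type*} {a : ι → E →L[ℝ] ℝ} {α : ι → ℝ}

theorem IsConvexPolyhedral.inter {S T : Set E} (hS : IsConvexPolyhedral S)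
    (hT : IsConvexPolyhedral T) : IsConvexPolyhedral (S ∩ T) := by
  obtain ⟨m, a, α, rfl⟩ := hS
  obtain ⟨n, b, β, rfl⟩ := hT
  refine ⟨m + n, Fin.append a b, Fin.append α β, ?_⟩
  ext z
  simp [Fin.forall_fin_add]

theorem isConvexPolyhedral_hyperplane (f : E →L[ℝ] ℝ) (c : ℝ) :
    IsConvexPolyhedral {z | f z = c} := by
  refine ⟨2, ![f, -f], ![c, -c], ?_⟩
  ext z
  simp [Fin.forall_fin_two, le_antisymm_iff]

theorem IsConvexPolyhedral.preimage {S : Set F} (hS : IsConvexPolyhedral S) (A : E →L[ℝ] F) :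
    IsConvexPolyhedral (A ⁻¹' S) := by
  obtain ⟨m, a, α, rfl⟩ := hS
  exact ⟨m, fun i => (a i).comp A, α, rfl⟩

theorem IsPolyhedral.preimage {S : Set F} (hS : IsPolyhedral S) (A : E →L[ℝ] F) :
    IsPolyhedral (A ⁻¹' S) := by
  obtain ⟨n, Si, hSi, rfl⟩ := hS
  exact ⟨n, fun i => A ⁻¹' Si i, fun i => (hSi i).preimage A, preimage_iUnion⟩

theorem isClosed_setOf_forall_apply_le : IsClosed {z | ∀ i, a i z ≤ α i} := by
  rw [ofPred_forall]
  exact isClosed_iInter fun i => isClosed_le (a i).continuous continuous_const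

theorem convex_setOf_forall_apply_le : Convex ℝ {z | ∀ i, a i z ≤ α i} := by
  rw [ofPred_forall]
  exact convex_iInter fun i => convex_halfSpace_le (a i).toLinearMap.isLinear (α i)

theorem apply_nonpos_of_mem_asymptoticCone {u : E} (hne : {z | ∀ i, a i z ≤ α i}.Nonempty)
    (hu : u ∈ asymptoticCone ℝ {z | ∀ i, a i z ≤ α i}) (i : ι) : a i u ≤ 0 := by
  obtain ⟨z, hz⟩ := hne
  refine nonpos_of_forall_pos_add_mul_le (x := a i z) (c := α i) fun t ht => ?_
  simpa [add_comm] using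
    convex_setOf_forall_apply_le.smul_vadd_mem_of_isClosed_of_mem_asymptoticCone
      isClosed_setOf_forall_apply_le ht.le hu hz i

theorem exists_sub_smul_mem_face [Fintype ι] {z u : E} (hz : ∀ i, a i z ≤ α i) {j : ι}
    (hj : a j u < 0) :
    ∃ (t : ℝ) (i : ι), a i u < 0 ∧ (∀ k, a k (z - t • u) ≤ α k) ∧ a i (z - t • u) = α i := by
  classical
  obtain ⟨i, hi, hmin⟩ := (Finset.univ.filter fun i => a i u < 0).exists_min_image
    (fun i => (α i - a i z) / -a i u) ⟨j, by simpa using hj⟩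
  simp only [Finset.mem_filter, Finset.mem_univ, true_and] at hi hmin
  refine ⟨(α i - a i z) / -a i u, i, hi, fun k => ?_, ?_⟩
  · have ht : 0 ≤ (α i - a i z) / -a i u := div_nonneg (sub_nonneg.2 (hz i)) (by linarith)
    simp only [map_sub, map_smul, smul_eq_mul]
    rcases lt_or_ge (a k u) 0 with hk | hk
    · have := (le_div_iff₀ (by linarith)).1 (hmin k hk)
      linarith
    · nlinarith [hz k]
  · have := hi.ne
    simp only [map_sub, map_smul, smul_eq_mul]
    field_simp
    ring

end Polyhedra

section Quadratic

variable {E : Type*} [NormedAddCommGroup E] [InnerProductSpace ℝ E] {B : E →L[ℝ] E} {b u : E}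

def qpObjective (B : E →L[ℝ] E) (b z : E) : ℝ := 1 / 2 * ⟪z, B z⟫ + ⟪b, z⟫

theorem continuous_qpObjective (B : E →L[ℝ] E) (b : E) : Continuous (qpObjective B b) := by
  unfold qpObjective
  fun_prop

theorem convexOn_qpObjective (hB : B.IsPositive) (b : E) : ConvexOn ℝ univ (qpObjective B b) := by
  refine ⟨convex_univ, fun x _ y _ s t hs ht hst => ?_⟩
  have hxy := hB.inner_nonneg_right (x - y)
  have hsym : ⟪y, B x⟫ = ⟪x, B y⟫ := by
    rw [← hB.inner_left_eq_inner_right, real_inner_comm]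
  obtain rfl : t = 1 - s := by linarith
  simp only [qpObjective, smul_eq_mul, map_add, map_smul, map_sub, inner_add_left,
    inner_add_right, inner_sub_left, inner_sub_right, real_inner_smul_left,
    real_inner_smul_right, hsym] at hxy ⊢
  nlinarith [mul_nonneg (mul_nonneg hs ht) hxy]

theorem qpObjective_add_smul (hB : (B : E →ₗ[ℝ] E).IsSymmetric) (z u : E) (t : ℝ) :
    qpObjective B b (z + t • u) =
      qpObjective B b z + t * ⟪B z + b, u⟫ + t ^ 2 * (⟪u, B u⟫ / 2) := by
  have h₁ : ⟪z, B u⟫ = ⟪B z, u⟫ := (hB.apply_clm z u).symm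
  have h₂ : ⟪u, B z⟫ = ⟪B z, u⟫ := real_inner_comm _ _
  simp only [qpObjective, map_add, map_smul, inner_add_left, inner_add_right,
    real_inner_smul_left, real_inner_smul_right, h₁, h₂]
  ring

theorem qpObjective_add_smul_of_map_eq_zero (hB : (B : E →ₗ[ℝ] E).IsSymmetric) (hBu : B u = 0)
    (z : E) (t : ℝ) : qpObjective B b (z + t • u) = qpObjective B b z + t * ⟪b, u⟫ := by
  simp [qpObjective_add_smul hB, inner_add_left, hB.apply_clm z u, hBu]

theorem ContinuousLinearMap.IsPositive.map_eq_zero_of_inner_map_self_eq_zero (hB : B.IsPositive)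
    (hu : ⟪u, B u⟫ = 0) : B u = 0 := by
  set v := B u
  have hquad (t : ℝ) : 0 ≤ t ^ 2 * ⟪v, B v⟫ - 2 * t * ⟪v, v⟫ := by
    have h := hB.inner_nonneg_right (u - t • v)
    have hsym : ⟪u, B v⟫ = ⟪v, v⟫ := (hB.inner_left_eq_inner_right u v).symm
    simp only [map_sub, map_smul, inner_sub_left, inner_sub_right, real_inner_smul_left,
      real_inner_smul_right, hsym] at h
    nlinarith
  have hc := hB.inner_nonneg_right v
  -- the parabola `hquad` is negative at this `t` unless `⟪v, v⟫ = 0`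
  set t := ⟪v, v⟫ / (⟪v, B v⟫ + 1)
  have ht : t * (⟪v, B v⟫ + 1) = ⟪v, v⟫ := div_mul_cancel₀ _ (by positivity)
  have ht0 : t = 0 := by nlinarith [hquad t, sq_nonneg t]
  exact inner_self_eq_zero.1 (by rw [← ht, ht0, zero_mul])

theorem map_eq_zero_of_mem_asymptoticCone_sublevel (hB : B.IsPositive) {c : ℝ} {z₀ : E}
    (hz₀ : qpObjective B b z₀ ≤ c) (hu : u ∈ asymptoticCone ℝ {z | qpObjective B b z ≤ c}) :
    B u = 0 ∧ ⟪b, u⟫ ≤ 0 := by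
  have hconv : Convex ℝ {z | qpObjective B b z ≤ c} := by
    simpa using (convexOn_qpObjective hB b).convex_le c
  have hray : ∀ t : ℝ, 0 < t → qpObjective B b (z₀ + t • u) ≤ c := fun t ht => by
    simpa [add_comm] using hconv.smul_vadd_mem_of_isClosed_of_mem_asymptoticCone
      (isClosed_le (continuous_qpObjective B b) continuous_const) ht.le hu hz₀
  have hBu : B u = 0 := by
    refine hB.map_eq_zero_of_inner_map_self_eq_zero (le_antisymm ?_ (hB.inner_nonneg_right u))
    have := nonpos_of_forall_pos_quadratic_le fun t ht => by
      have := hray t ht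
      rwa [qpObjective_add_smul hB.isSymmetric] at this
    linarith
  refine ⟨hBu, nonpos_of_forall_pos_add_mul_le (x := qpObjective B b z₀) (c := c) fun t ht => ?_⟩
  have := hray t ht
  rwa [qpObjective_add_smul_of_map_eq_zero hB.isSymmetric hBu] at this

theorem inner_nonneg_of_bddBelow (hB : (B : E →ₗ[ℝ] E).IsSymmetric) (hBu : B u = 0) {S : Set E}
    {z : E} (hray : ∀ t : ℝ, 0 ≤ t → z + t • u ∈ S) (hbdd : BddBelow (qpObjective B b '' S)) :
    0 ≤ ⟪b, u⟫ := by
  obtain ⟨μ, hμ⟩ := hbdd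
  refine neg_nonpos.1 (nonpos_of_forall_pos_add_mul_le (x := -qpObjective B b z) (c := -μ)
    fun t ht => ?_)
  have := hμ (mem_image_of_mem _ (hray t ht.le))
  rw [qpObjective_add_smul_of_map_eq_zero hB hBu] at this
  linarith

end Quadratic

section FrankWolfe

variable {E : Type*} [NormedAddCommGroup E] [InnerProductSpace ℝ E] [FiniteDimensional ℝ E]
  {B : E →L[ℝ] E} {b : E}

theorem exists_ne_zero_apply_nonpos_and_qpObjective_sub_smul_eq {ι : Type*}
    {a : ι → E →L[ℝ] ℝ} {α : ι → ℝ} (hB : B.IsPositive) {z₁ : E} (hz₁ : ∀ i, a i z₁ ≤ α i)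
    (hbdd : BddBelow (qpObjective B b '' {z | ∀ i, a i z ≤ α i}))
    (hL : ¬ Bornology.IsBounded
      ({z | ∀ i, a i z ≤ α i} ∩ {z | qpObjective B b z ≤ qpObjective B b z₁})) :
    ∃ u ≠ 0, (∀ i, a i u ≤ 0) ∧
      ∀ (z : E) (t : ℝ), qpObjective B b (z - t • u) = qpObjective B b z := by
  obtain ⟨u, hu, hu0⟩ := exists_ne_zero_mem_asymptoticCone hL
  have hau := apply_nonpos_of_mem_asymptoticCone ⟨z₁, hz₁⟩
    (asymptoticCone_mono inter_subset_left hu)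
  obtain ⟨hBu, hbu_le⟩ := map_eq_zero_of_mem_asymptoticCone_sublevel hB le_rfl
    (asymptoticCone_mono inter_subset_right hu)
  have hray (t : ℝ) (ht : 0 ≤ t) : z₁ + t • u ∈ {z | ∀ i, a i z ≤ α i} := fun i => by
    simpa using add_le_of_le_of_nonpos (hz₁ i) (mul_nonpos_of_nonneg_of_nonpos ht (hau i))
  have hbu : ⟪b, u⟫ = 0 :=
    hbu_le.antisymm (inner_nonneg_of_bddBelow hB.isSymmetric hBu hray hbdd)
  refine ⟨u, hu0, hau, fun z t => ?_⟩
  have := qpObjective_add_smul_of_map_eq_zero (b := b) hB.isSymmetric hBu z (-t)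
  rwa [hbu, mul_zero, add_zero, neg_smul, ← sub_eq_add_neg] at this

theorem IsConvexPolyhedral.exists_isMinOn_qpObjective (hB : B.IsPositive) {S : Set E}
    (hS : IsConvexPolyhedral S) (hne : S.Nonempty) (hbdd : BddBelow (qpObjective B b '' S)) :
    ∃ z ∈ S, IsMinOn (qpObjective B b) S z := by
  induction hn : Module.finrank ℝ (vectorSpan ℝ S) using Nat.strong_induction_on
    generalizing S with
  | _ n ih =>
  obtain ⟨z₁, hz₁⟩ := hne
  obtain ⟨m, a, α, rfl⟩ := id hS
  set P : Set E := {z | ∀ i, a i z ≤ α i}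
  set q := qpObjective B b
  by_cases hL : Bornology.IsBounded (P ∩ {z | q z ≤ q z₁})
  · exact exists_isMinOn_of_isBounded_sublevel (continuous_qpObjective B b)
      isClosed_setOf_forall_apply_le hz₁ hL
  obtain ⟨u, hu0, hau, hqu⟩ :=
    exists_ne_zero_apply_nonpos_and_qpObjective_sub_smul_eq hB hz₁ hbdd hL
  have huP : u ∈ vectorSpan ℝ P := by
    have hz₁u : z₁ + u ∈ P := fun i => by simpa using add_le_of_le_of_nonpos (hz₁ i) (hau i)
    simpa using vsub_mem_vectorSpan ℝ hz₁u hz₁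
  have hslice (f : E →L[ℝ] ℝ) (c : ℝ) (hfu : f u ≠ 0) (hne : (P ∩ {z | f z = c}).Nonempty) :
      ∃ z ∈ P ∩ {z | f z = c}, IsMinOn q (P ∩ {z | f z = c}) z :=
    ih _ (hn ▸ finrank_vectorSpan_inter_hyperplane_lt (f := (f : E →ₗ[ℝ] ℝ)) huP hfu c)
      (hS.inter (isConvexPolyhedral_hyperplane f c)) hne
      (hbdd.mono (image_mono inter_subset_left)) rfl
  by_cases hdir : ∃ j, a j u < 0
  · obtain ⟨j, hj⟩ := hdir
    refine exists_isMinOn_of_finite_cover (fun i : {i // a i u < 0} => P ∩ {z | a i z = α i})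
      (fun _ => inter_subset_left) (fun i => hslice _ _ i.2.ne) (fun z hz => ?_) ⟨z₁, hz₁⟩
    obtain ⟨t, i, hi, hmem, heq⟩ := exists_sub_smul_mem_face hz hj
    exact ⟨⟨i, hi⟩, z - t • u, ⟨hmem, heq⟩, (hqu z t).le⟩
  · have hau0 (i : Fin m) : a i u = 0 := (hau i).antisymm (not_lt.1 fun h => hdir ⟨i, h⟩)
    obtain ⟨f, hf⟩ := SeparatingDual.exists_eq_one (R := ℝ) hu0
    refine exists_isMinOn_of_finite_cover (fun _ : Unit => P ∩ {z | f z = f z₁})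
      (fun _ => inter_subset_left) (fun _ => hslice _ _ (by simp [hf])) (fun z hz => ?_)
      ⟨z₁, hz₁⟩
    refine ⟨(), z - (f z - f z₁) • u, ⟨fun i => ?_, ?_⟩, (hqu _ _).le⟩
    · simpa [hau0 i] using hz i
    · simp [hf]

theorem IsPolyhedral.exists_isMinOn_qpObjective (hB : B.IsPositive) {S : Set E}
    (hS : IsPolyhedral S) (hne : S.Nonempty) (hbdd : BddBelow (qpObjective B b '' S)) :
    ∃ z ∈ S, IsMinOn (qpObjective B b) S z := by
  obtain ⟨n, Si, hSi, rfl⟩ := hS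
  refine exists_isMinOn_of_finite_cover Si (subset_iUnion Si) (fun i hi =>
    (hSi i).exists_isMinOn_qpObjective hB hi (hbdd.mono (image_mono (subset_iUnion Si i))))
    (fun z hz => ?_) hne
  obtain ⟨i, hi⟩ := mem_iUnion.1 hz
  exact ⟨i, z, hi, le_rfl⟩

end FrankWolfe

theorem bddBelow_image_iff_not_exists_tendsto_atBot {α : Type*} {f : α → ℝ} {S : Set α} :
    BddBelow (f '' S) ↔
      ¬ ∃ z : ℕ → α, (∀ k, z k ∈ S) ∧ Tendsto (fun k => f (z k)) atTop atBot := by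
  refine ⟨fun ⟨μ, hμ⟩ ⟨z, hz, hlim⟩ => ?_, fun h => ?_⟩
  · obtain ⟨k, hk⟩ := (hlim.eventually_lt_atBot μ).exists
    exact hk.not_ge (hμ (mem_image_of_mem f (hz k)))
  · by_contra hunb
    have hlow (k : ℕ) : ∃ z ∈ S, f z < -k := by
      obtain ⟨_, ⟨z, hz, rfl⟩, hlt⟩ := not_bddBelow_iff.1 hunb (-k)
      exact ⟨z, hz, hlt⟩
    choose z hz hlt using hlow
    exact h ⟨z, hz, tendsto_atBot_mono (fun k => (hlt k).le)
      (tendsto_neg_atTop_atBot.comp tendsto_natCast_atTop_atTop)⟩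

theorem stmt7 {d s : ℕ} (B : Rd d →L[ℝ] Rd d)
    (hBsym : ∀ x y : Rd d, (inner ℝ (B x) y : ℝ) = inner ℝ x (B y))
    (hBpsd : ∀ x : Rd d, (0:ℝ) ≤ inner ℝ x (B x))
    (b : Rd d) (A : Rd d →L[ℝ] Rd s) (C : Set (Rd s)) (hC : IsPolyhedral C)
    (q : Rd d → ℝ)
    (hq : q = fun z => (1/2) * (inner ℝ z (B z) : ℝ) + (inner ℝ b z : ℝ)) :
    (({z : Rd d | A z ∈ C} = ∅) ∧
      ¬ (∃ zk : ℕ → Rd d, (∀ k, A (zk k) ∈ C) ∧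
          Filter.Tendsto (fun k => q (zk k)) Filter.atTop Filter.atBot) ∧
      ¬ (∃ zb : Rd d, A zb ∈ C ∧ ∀ z : Rd d, A z ∈ C → q zb ≤ q z)) ∨
    (¬ ({z : Rd d | A z ∈ C} = ∅) ∧
      (∃ zk : ℕ → Rd d, (∀ k, A (zk k) ∈ C) ∧
          Filter.Tendsto (fun k => q (zk k)) Filter.atTop Filter.atBot) ∧
      ¬ (∃ zb : Rd d, A zb ∈ C ∧ ∀ z : Rd d, A z ∈ C → q zb ≤ q z)) ∨
    (¬ ({z : Rd d | A z ∈ C} = ∅) ∧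
      ¬ (∃ zk : ℕ → Rd d, (∀ k, A (zk k) ∈ C) ∧
          Filter.Tendsto (fun k => q (zk k)) Filter.atTop Filter.atBot) ∧
      (∃ zb : Rd d, A zb ∈ C ∧ ∀ z : Rd d, A z ∈ C → q zb ≤ q z)) := by
  have hB : B.IsPositive :=
    (B.isPositive_iff).2 ⟨hBsym, fun x => real_inner_comm x (B x) ▸ hBpsd x⟩
  obtain rfl : q = qpObjective B b := hq
  have hmin_iff : (∃ zb, A zb ∈ C ∧ ∀ z, A z ∈ C → qpObjective B b zb ≤ qpObjective B b z) ↔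
      ∃ zb ∈ A ⁻¹' C, IsMinOn (qpObjective B b) (A ⁻¹' C) zb := by
    simp only [isMinOn_iff, mem_preimage]
  rw [hmin_iff]
  rcases (A ⁻¹' C).eq_empty_or_nonempty with hempty | hne
  · exact Or.inl ⟨hempty, fun ⟨zk, hzk, _⟩ => hempty.subset (hzk 0),
      fun ⟨zb, hzb, _⟩ => hempty.subset hzb⟩
  by_cases hunb : ∃ zk : ℕ → Rd d, (∀ k, A (zk k) ∈ C) ∧
      Tendsto (fun k => qpObjective B b (zk k)) atTop atBot
  · exact Or.inr (Or.inl ⟨hne.ne_empty, hunb, fun ⟨_, _, hmin⟩ =>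
      bddBelow_image_iff_not_exists_tendsto_atBot.1 hmin.bddBelow hunb⟩)
  · exact Or.inr (Or.inr ⟨hne.ne_empty, hunb, (hC.preimage A).exists_isMinOn_qpObjective hB hne
      (bddBelow_image_iff_not_exists_tendsto_atBot.2 hunb)⟩)
end
end

section
/- Let Ω ⊆ ℝ^d be locally polyhedral near z̄ ∈ Ω, i.e. there is a neighborhood W of z̄ and a polyhedral set C (a finite union of convex polyhedral sets) with Ω ∩ W = C ∩ W. Then the limiting normal cone satisfies N_Ω(z̄) = ⋃_{w ∈ T_Ω(z̄)} N̂_{T_Ω(z̄)}(w), the union over tangent directions w of the regular normal cones to the tangent cone T_Ω(z̄) at w. -/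
open Set Filter Topology Metric Pointwise

noncomputable section

/-!
Near `z`, a polyhedral set coincides with `z + K`, where `K` is the union, over the pieces
containing `z`, of the cones cut out by the constraints active at `z`; hence `T_Ω(z) = K` and
`N_Ω(z) = N_K(0)`. Tangent cones of the polyhedral set `K` take only finitely many values, so
along a sequence `y_k → 0` one tangent cone `T_K(y)` recurs infinitely often and the limit of
regular normals at the `y_k` lies in its closed polar, i.e. in `N̂_K(y)`. Conversely, a regular
normal to `K` at `w` is one at every `t • w`, `t > 0`, and `t • w → 0`.
-/

theorem add_mem_vadd_set_iff {G : Type*} [AddGroup G] {S : Set G} {y x : G} :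
    y + x ∈ y +ᵥ S ↔ x ∈ S :=
  vadd_mem_vadd_set_iff

section TangentCone

variable {E : Type*} [NormedAddCommGroup E] [NormedSpace ℝ E]

theorem tangentConeSeq_mono_of_inter_nhds {A B U : Set E} {y : E} (hU : U ∈ 𝓝 y)
    (hAB : A ∩ U ⊆ B) : tangentConeSeq A y ⊆ tangentConeSeq B y := by
  rintro w ⟨t, wk, ht, ht0, hwk, hmem⟩
  have hlim : Tendsto (fun k => y + t k • wk k) atTop (𝓝 y) := by
    simpa using tendsto_const_nhds.add (ht0.smul hwk)
  obtain ⟨N, hN⟩ := eventually_atTop.mp (hlim.eventually_mem hU)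
  exact ⟨fun k => t (k + N), fun k => wk (k + N), fun k => ht _,
    ht0.comp (tendsto_add_atTop_nat N), hwk.comp (tendsto_add_atTop_nat N),
    fun k => hAB ⟨hmem _, hN _ (Nat.le_add_left N k)⟩⟩

theorem tangentConeSeq_congr_of_inter_nhds {A B U : Set E} {y : E} (hU : U ∈ 𝓝 y)
    (h : A ∩ U = B ∩ U) : tangentConeSeq A y = tangentConeSeq B y :=
  (tangentConeSeq_mono_of_inter_nhds hU (h.le.trans inter_subset_left)).antisymm
    (tangentConeSeq_mono_of_inter_nhds hU (h.ge.trans inter_subset_left))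

theorem tangentConeSeq_vadd (S : Set E) (y x : E) :
    tangentConeSeq (y +ᵥ S) (y + x) = tangentConeSeq S x := by
  simp only [tangentConeSeq, add_assoc, add_mem_vadd_set_iff]

theorem IsCone.tangentConeSeq_smul_s12 {S : Set E} (hS : IsCone S) {c : ℝ} (hc : 0 < c) (w : E) :
    tangentConeSeq S (c • w) = tangentConeSeq S w := by
  suffices h : ∀ {c : ℝ}, 0 < c → ∀ w, tangentConeSeq S (c • w) ⊆ tangentConeSeq S w by
    refine (h hc w).antisymm ?_
    simpa [smul_smul, hc.ne'] using h (inv_pos.mpr hc) (c • w)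
  rintro c hc w u ⟨t, wk, ht, ht0, hwk, hmem⟩
  refine ⟨fun k => c⁻¹ * t k, wk, fun k => mul_pos (inv_pos.mpr hc) (ht k),
    by simpa using ht0.const_mul c⁻¹, hwk, fun k => ?_⟩
  simpa [smul_add, smul_smul, hc.ne'] using hS _ (hmem k) c⁻¹ (by positivity)

theorem IsCone.tangentConeSeq_zero_s12 {S : Set E} (hS : IsCone S) (hcl : IsClosed S) :
    tangentConeSeq S 0 = S := by
  refine subset_antisymm ?_ fun w hw => ?_
  · rintro w ⟨t, wk, ht, -, hwk, hmem⟩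
    refine hcl.mem_of_tendsto hwk (Eventually.of_forall fun k => ?_)
    simpa [smul_smul, (ht k).ne'] using hS _ (hmem k) (t k)⁻¹ (inv_pos.mpr (ht k)).le
  · exact ⟨fun k => 1 / (k + 1), fun _ => w, fun k => by positivity,
      tendsto_one_div_add_atTop_nhds_zero_nat, tendsto_const_nhds,
      fun k => by simpa using hS _ hw (1 / (k + 1)) (by positivity)⟩

theorem tangentConeSeq_eq_of_inter_nhds_eq_vadd {S K V : Set E} {y : E} (hK : IsCone K)
    (hKc : IsClosed K) (hV : V ∈ 𝓝 y) (h : S ∩ V = (y +ᵥ K) ∩ V) :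
    tangentConeSeq S y = K := by
  have hvadd := tangentConeSeq_vadd K y 0
  rw [add_zero] at hvadd
  rw [tangentConeSeq_congr_of_inter_nhds hV h, hvadd, hK.tangentConeSeq_zero_s12 hKc]

end TangentCone

section NormalCone

variable {E : Type*} [NormedAddCommGroup E] [InnerProductSpace ℝ E]

theorem isClosed_polarCone (K : Set E) : IsClosed (polarCone K) := by
  simp only [polarCone, ofPred_forall]
  exact isClosed_biInter fun w _ => isClosed_le (continuous_id.inner continuous_const)
    continuous_const

theorem regNormal_congr_of_inter_nhds {A B U : Set E} {x : E} (hU : U ∈ 𝓝 x)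
    (h : A ∩ U = B ∩ U) : regNormal A x = regNormal B x := by
  have hx : x ∈ A ↔ x ∈ B := by
    simpa [mem_of_mem_nhds hU] using congrArg (x ∈ ·) h
  simp only [regNormal, hx, tangentConeSeq_congr_of_inter_nhds hU h]

theorem limNormal_subset_of_inter_isOpen {A B U : Set E} {z : E} (hU : IsOpen U) (hzU : z ∈ U)
    (h : A ∩ U = B ∩ U) : limNormal A z ⊆ limNormal B z := by
  rintro v ⟨zk, vk, hzA, hvN, hz, hv⟩
  obtain ⟨N, hN⟩ := eventually_atTop.mp (hz.eventually_mem (hU.mem_nhds hzU))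
  have hzkU (k : ℕ) : zk (k + N) ∈ U := hN _ (Nat.le_add_left N k)
  refine ⟨fun k => zk (k + N), fun k => vk (k + N), fun k => (h.subset ⟨hzA _, hzkU k⟩).1,
    fun k => ?_, hz.comp (tendsto_add_atTop_nat N), hv.comp (tendsto_add_atTop_nat N)⟩
  rw [← regNormal_congr_of_inter_nhds (hU.mem_nhds (hzkU k)) h]
  exact hvN _

theorem limNormal_congr_of_inter_isOpen {A B U : Set E} {z : E} (hU : IsOpen U) (hzU : z ∈ U)
    (h : A ∩ U = B ∩ U) : limNormal A z = limNormal B z :=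
  (limNormal_subset_of_inter_isOpen hU hzU h).antisymm (limNormal_subset_of_inter_isOpen hU hzU h.symm)

theorem regNormal_vadd (S : Set E) (y x : E) :
    regNormal (y +ᵥ S) (y + x) = regNormal S x := by
  simp only [regNormal, tangentConeSeq_vadd, add_mem_vadd_set_iff]

theorem limNormal_vadd_subset (S : Set E) (y x : E) :
    limNormal (y +ᵥ S) (y + x) ⊆ limNormal S x := by
  rintro v ⟨zk, vk, hzS, hvN, hz, hv⟩
  refine ⟨fun k => -y + zk k, vk, fun k => mem_vadd_set_iff_neg_vadd_mem.mp (hzS k),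
    fun k => ?_, by simpa using (tendsto_const_nhds (x := -y)).add hz, hv⟩
  rw [← regNormal_vadd S y, add_neg_cancel_left]
  exact hvN k

theorem limNormal_vadd (S : Set E) (y x : E) :
    limNormal (y +ᵥ S) (y + x) = limNormal S x := by
  refine (limNormal_vadd_subset S y x).antisymm ?_
  simpa using limNormal_vadd_subset (y +ᵥ S) (-y) (y + x)

theorem limNormal_subset_iUnion_regNormal {S : Set E}
    (hS : (tangentConeSeq S '' S).Finite) (z : E) :
    limNormal S z ⊆ ⋃ y ∈ S, regNormal S y := by
  rintro v ⟨zk, vk, hzS, hvN, -, hv⟩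
  have : Finite (tangentConeSeq S '' S) := hS.to_subtype
  obtain ⟨K, hK⟩ : ∃ K : tangentConeSeq S '' S, ∃ᶠ k in atTop, tangentConeSeq S (zk k) = K :=
    frequently_exists.mp (Frequently.of_forall fun k =>
      ⟨⟨_, mem_image_of_mem _ (hzS k)⟩, rfl⟩)
  have hvK : v ∈ polarCone (K : Set E) :=
    (isClosed_polarCone _).mem_of_frequently_of_tendsto
      (hK.mono fun k hk => hk ▸ (hvN k).2) hv
  obtain ⟨k, hk⟩ := hK.exists
  exact mem_biUnion (hzS k) ⟨hzS k, hk ▸ hvK⟩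

theorem IsCone.regNormal_subset_limNormal_zero {S : Set E} (hS : IsCone S) {w : E}
    (hw : w ∈ S) : regNormal S w ⊆ limNormal S 0 := by
  intro v hv
  have hpos (k : ℕ) : (0 : ℝ) < 1 / (k + 1) := by positivity
  refine ⟨fun k => (1 / (k + 1) : ℝ) • w, fun _ => v, fun k => hS w hw _ (hpos k).le,
    fun k => ⟨hS w hw _ (hpos k).le, ?_⟩, ?_, tendsto_const_nhds⟩
  · rw [hS.tangentConeSeq_smul_s12 (hpos k)]
    exact hv.2
  · simpa using (tendsto_one_div_add_atTop_nhds_zero_nat (𝕜 := ℝ)).smul_const w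

theorem IsCone.limNormal_zero_eq_s12 {S : Set E} (hS : IsCone S)
    (hfin : (tangentConeSeq S '' S).Finite) : limNormal S 0 = ⋃ w ∈ S, regNormal S w :=
  (limNormal_subset_iUnion_regNormal hfin 0).antisymm
    (iUnion₂_subset fun _ hw => hS.regNormal_subset_limNormal_zero hw)

end NormalCone

section Polyhedral

variable {E : Type*} [NormedAddCommGroup E] [NormedSpace ℝ E]

theorem IsConvexPolyhedral.isClosed {C : Set E} (h : IsConvexPolyhedral C) : IsClosed C := by
  obtain ⟨n, a, α, rfl⟩ := h
  simp only [ofPred_forall]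
  exact isClosed_iInter fun i => isClosed_le (a i).continuous continuous_const

theorem IsPolyhedral.isClosed {C : Set E} (h : IsPolyhedral C) : IsClosed C := by
  obtain ⟨n, Ci, hCi, rfl⟩ := h
  exact isClosed_iUnion_of_finite fun i => (hCi i).isClosed

structure PolyhedralRep (E : Type*) [NormedAddCommGroup E] [NormedSpace ℝ E] where
  n : ℕ
  m : Fin n → ℕ
  a : ∀ i, Fin (m i) → E →L[ℝ] ℝ
  α : ∀ i, Fin (m i) → ℝ

namespace PolyhedralRep

variable (R : PolyhedralRep E)

def cell (i : Fin R.n) : Set E := {x | ∀ j, R.a i j x ≤ R.α i j}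

def carrier : Set E := ⋃ i, R.cell i

def activeCone (y : E) : Set E :=
  ⋃ i, {w | y ∈ R.cell i ∧ ∀ j, R.a i j y = R.α i j → R.a i j w ≤ 0}

theorem isClosed_cell (i : Fin R.n) : IsClosed (R.cell i) :=
  IsConvexPolyhedral.isClosed ⟨_, _, _, rfl⟩

theorem isCone_activeCone (y : E) : IsCone (R.activeCone y) := by
  rintro w hw c hc
  obtain ⟨i, hyi, hact⟩ := mem_iUnion.mp hw
  refine mem_iUnion.mpr ⟨i, hyi, fun j hj => ?_⟩
  rw [map_smul, smul_eq_mul]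
  exact mul_nonpos_of_nonneg_of_nonpos hc (hact j hj)

theorem isPolyhedral_activeCone (y : E) : IsPolyhedral (R.activeCone y) := by
  refine ⟨R.n, fun i => {w | y ∈ R.cell i ∧ ∀ j, R.a i j y = R.α i j → R.a i j w ≤ 0},
    fun i => ?_, rfl⟩
  by_cases hyi : y ∈ R.cell i
  · refine ⟨R.m i, fun j => if R.a i j y = R.α i j then R.a i j else 0, fun _ => 0, ?_⟩
    ext w
    simp only [mem_ofPred_eq, hyi, true_and]
    refine forall_congr' fun j => ?_
    by_cases hj : R.a i j y = R.α i j <;> simp [hj]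
  · refine ⟨1, fun _ => 0, fun _ => -1, ?_⟩
    ext w
    simp [hyi]

theorem carrier_inter_eq_vadd_activeCone (y : E) :
    ∃ U, IsOpen U ∧ y ∈ U ∧ R.carrier ∩ U = (y +ᵥ R.activeCone y) ∩ U := by
  -- near `y`, inactive constraints stay strict and cells missing `y` stay missed
  set U : Set E := (⋂ i, ⋂ j, {x | R.a i j y < R.α i j → R.a i j x < R.α i j}) ∩
    ⋂ i, ⋂ (_ : y ∉ R.cell i), (R.cell i)ᶜ
  have hU : IsOpen U := by
    refine .inter (isOpen_iInter_of_finite fun i => isOpen_iInter_of_finite fun j => ?_)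
      (isOpen_iInter_of_finite fun i => isOpen_iInter_of_finite fun _ =>
        (R.isClosed_cell i).isOpen_compl)
    by_cases h : R.a i j y < R.α i j
    · simpa [h] using isOpen_lt (R.a i j).continuous continuous_const
    · simp [h]
  refine ⟨U, hU, by simp [U], ?_⟩
  ext x
  simp only [U, mem_inter_iff, mem_iInter, mem_compl_iff, mem_ofPred_eq, and_congr_left_iff]
  rintro ⟨hstrict, hmiss⟩
  simp only [carrier, activeCone, cell, mem_iUnion, mem_vadd_set_iff_neg_vadd_mem, vadd_eq_add,
    mem_ofPred_eq, map_add, map_neg]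
  constructor
  · rintro ⟨i, hxi⟩
    have hyi : ∀ j, R.a i j y ≤ R.α i j := by_contra fun h => hmiss i h hxi
    exact ⟨i, hyi, fun j hj => by linarith [hxi j]⟩
  · rintro ⟨i, hyi, hact⟩
    refine ⟨i, fun j => ?_⟩
    rcases (hyi j).eq_or_lt with hj | hj
    · linarith [hact j hj]
    · exact (hstrict i j hj).le

theorem tangentConeSeq_carrier (y : E) : tangentConeSeq R.carrier y = R.activeCone y := by
  obtain ⟨U, hU, hyU, hloc⟩ := R.carrier_inter_eq_vadd_activeCone y
  exact tangentConeSeq_eq_of_inter_nhds_eq_vadd (R.isCone_activeCone y)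
    (R.isPolyhedral_activeCone y).isClosed (hU.mem_nhds hyU) hloc

theorem finite_range_tangentConeSeq : (range (tangentConeSeq R.carrier)).Finite := by
  -- the active cone at `y` depends only on which cells contain `y` and which constraints are active
  refine (finite_range fun s : ∀ i, Prop × (Fin (R.m i) → Prop) =>
    ⋃ i, {w : E | (s i).1 ∧ ∀ j, (s i).2 j → R.a i j w ≤ 0}).subset ?_
  rintro _ ⟨y, rfl⟩
  exact ⟨fun i => (y ∈ R.cell i, fun j => R.a i j y = R.α i j),
    (R.tangentConeSeq_carrier y).symm⟩

end PolyhedralRep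

theorem IsPolyhedral.exists_polyhedralRep {C : Set E} (h : IsPolyhedral C) :
    ∃ R : PolyhedralRep E, R.carrier = C := by
  obtain ⟨n, Ci, hCi, rfl⟩ := h
  choose m a α hrep using hCi
  exact ⟨⟨n, m, a, α⟩, iUnion_congr fun i => (hrep i).symm⟩

theorem IsPolyhedral.finite_range_tangentConeSeq {C : Set E} (h : IsPolyhedral C) :
    (range (tangentConeSeq C)).Finite := by
  obtain ⟨R, rfl⟩ := h.exists_polyhedralRep
  exact R.finite_range_tangentConeSeq

theorem LocallyPolyhedral.exists_inter_eq_vadd {Ω : Set E} {z : E}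
    (h : LocallyPolyhedral Ω z) : ∃ K, IsPolyhedral K ∧ IsCone K ∧
      ∃ V, IsOpen V ∧ z ∈ V ∧ Ω ∩ V = (z +ᵥ K) ∩ V := by
  obtain ⟨W, hW, C, hC, hΩC⟩ := h
  obtain ⟨R, rfl⟩ := hC.exists_polyhedralRep
  obtain ⟨U, hU, hzU, hCU⟩ := R.carrier_inter_eq_vadd_activeCone z
  refine ⟨R.activeCone z, R.isPolyhedral_activeCone z, R.isCone_activeCone z, interior W ∩ U,
    isOpen_interior.inter hU, ⟨mem_interior_iff_mem_nhds.mpr hW, hzU⟩, ?_⟩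
  ext x
  have hΩCx := congrArg (x ∈ ·) hΩC
  have hCUx := congrArg (x ∈ ·) hCU
  have hWx : x ∈ interior W → x ∈ W := fun hx => interior_subset hx
  simp only [mem_inter_iff, eq_iff_iff] at hΩCx hCUx ⊢
  tauto

end Polyhedral

theorem stmt12_general {d : ℕ} (Ω : Set (Rd d)) (z : Rd d)
    (hpoly : LocallyPolyhedral Ω z) :
    limNormal Ω z = ⋃ w ∈ tangentConeSeq Ω z, regNormal (tangentConeSeq Ω z) w := by
  obtain ⟨K, hKpoly, hKcone, V, hV, hzV, hΩV⟩ := hpoly.exists_inter_eq_vadd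
  rw [tangentConeSeq_eq_of_inter_nhds_eq_vadd hKcone hKpoly.isClosed (hV.mem_nhds hzV) hΩV]
  calc limNormal Ω z = limNormal (z +ᵥ K) (z + 0) := by
        rw [add_zero]; exact limNormal_congr_of_inter_isOpen hV hzV hΩV
    _ = limNormal K 0 := limNormal_vadd K z 0
    _ = ⋃ w ∈ K, regNormal K w := hKcone.limNormal_zero_eq_s12
        (hKpoly.finite_range_tangentConeSeq.subset (image_subset_range _ _))

theorem stmt12 {d : ℕ} (Ω : Set (Rd d)) (hΩ : IsClosed Ω) (z : Rd d) (hz : z ∈ Ω)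
    (hpoly : LocallyPolyhedral Ω z) :
    limNormal Ω z = ⋃ w ∈ tangentConeSeq Ω z, regNormal (tangentConeSeq Ω z) w :=
  stmt12_general Ω z hpoly
end
end
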